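/- Let d ≥ 5 and let u ∈ H¹(ℝ^d); write x = (y, x_d) ∈ ℝ^{d−1} × ℝ. Then there is a constant C > 0 depending only on d such that ∫_ℝ ‖u(·, x_d)‖_{L²(ℝ^{d−1})}^{2d/(d−4)} dx_d ≤ C ‖∂_d u‖_{L²(ℝ^d)}^{4/(d−4)} ‖u‖_{L²(ℝ^d)}^{2(d−2)/(d−4)}, where ∂_d is the partial derivative in the last coordinate. -/

import Mathlib

/-! Let `f t = ‖u(·, t)‖²`. On each line `{y} × ℝ`, `|u|²` is integrable with integrable
derivative `2 Re(ū ∂_d u)`, so it vanishes at `-∞` and the fundamental theorem of calculus gives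
`|u(y,t)|² ≤ 2 ∫ |u(y,·)| |∂_d u(y,·)|`. Integrating in `y` and applying Cauchy–Schwarz,
`f ≤ 2 ‖u‖₂ ‖∂_d u‖₂` everywhere, while `∫ f = ‖u‖₂²`. Hence
`∫ f ^ (d/(d-4)) ≤ (sup f) ^ (4/(d-4)) ∫ f`, which is the claim with `C = 2 ^ (4/(d-4))`. -/

open MeasureTheory Real Filter Set Topology

theorem DifferentiableAt.hasDerivAt_comp_prodMk {E F : Type*} [NormedAddCommGroup E]
    [NormedSpace ℝ E] [NormedAddCommGroup F] [NormedSpace ℝ F] {u : E × ℝ → F} {y : E} {s : ℝ}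
    (hu : DifferentiableAt ℝ u (y, s)) :
    HasDerivAt (fun s => u (y, s)) (fderiv ℝ u (y, s) (0, 1)) s :=
  hu.hasFDerivAt.comp_hasDerivAt s ((hasDerivAt_const s y).prodMk (hasDerivAt_id s))

section
variable {F : Type*} [NormedAddCommGroup F] [InnerProductSpace ℝ F]

theorem sq_norm_le_two_mul_integral_norm_mul_norm_deriv {g g' : ℝ → F}
    (hg : ∀ s, HasDerivAt g (g' s) s) (hg_sq : Integrable (fun s => ‖g s‖ ^ 2))
    (hgg' : Integrable (fun s => ‖g s‖ * ‖g' s‖)) (t : ℝ) :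
    ‖g t‖ ^ 2 ≤ 2 * ∫ s, ‖g s‖ * ‖g' s‖ := by
  set D : ℝ → ℝ := fun s => 2 * inner ℝ (g s) (g' s)
  have hD : ∀ s, HasDerivAt (‖g ·‖ ^ 2) (D s) s := fun s => (hg s).norm_sq
  have hD_le : ∀ s, ‖D s‖ ≤ 2 * (‖g s‖ * ‖g' s‖) := fun s => by
    rw [norm_mul, Real.norm_two]
    exact mul_le_mul_of_nonneg_left (norm_inner_le_norm _ _) zero_le_two
  have hD_int : Integrable D := by
    have hD_meas : Measurable D := by
      rw [← funext fun s => (hD s).deriv]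
      exact measurable_deriv _
    exact (hgg'.const_mul 2).mono' hD_meas.aestronglyMeasurable (.of_forall hD_le)
  have h_lim : Tendsto (‖g ·‖ ^ 2) atBot (𝓝 0) :=
    tendsto_zero_of_hasDerivAt_of_integrableOn_Iic (a := t) (fun s _ => hD s)
      hD_int.integrableOn hg_sq.integrableOn
  have h_ftc : ∫ s in Iic t, D s = ‖g t‖ ^ 2 := by
    rw [integral_Iic_of_hasDerivAt_of_tendsto' (fun s _ => hD s) hD_int.integrableOn h_lim,
      sub_zero]
  calc ‖g t‖ ^ 2 = ∫ s in Iic t, D s := h_ftc.symm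
    _ ≤ ∫ s in Iic t, ‖D s‖ := (Real.le_norm_self _).trans (norm_integral_le_integral_norm _)
    _ ≤ ∫ s, ‖D s‖ := setIntegral_le_integral hD_int.norm (.of_forall fun _ => norm_nonneg _)
    _ ≤ ∫ s, 2 * (‖g s‖ * ‖g' s‖) := integral_mono hD_int.norm (hgg'.const_mul 2) hD_le
    _ = 2 * ∫ s, ‖g s‖ * ‖g' s‖ := integral_const_mul _ _

theorem integral_sq_norm_slice_le {E : Type*} [MeasurableSpace E] {μ : Measure E} [SFinite μ]
    {u u' : E × ℝ → F}
    (hu : ∀ y s, HasDerivAt (fun s => u (y, s)) (u' (y, s)) s)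
    (hu_sq : Integrable (fun x => ‖u x‖ ^ 2) (μ.prod volume))
    (huu' : Integrable (fun x => ‖u x‖ * ‖u' x‖) (μ.prod volume)) (t : ℝ) :
    ∫ y, ‖u (y, t)‖ ^ 2 ∂μ ≤ 2 * ∫ x, ‖u x‖ * ‖u' x‖ ∂μ.prod volume := by
  rw [integral_prod _ huu', ← integral_const_mul]
  refine integral_mono_of_nonneg (.of_forall fun _ => by positivity)
    (huu'.integral_prod_left.const_mul 2) ?_
  filter_upwards [hu_sq.prod_right_ae, huu'.prod_right_ae] with y hy_sq hyy'
  exact sq_norm_le_two_mul_integral_norm_mul_norm_deriv (hu y) hy_sq hyy' t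

end

section
variable {α E : Type*} [MeasurableSpace α] {μ : Measure α} [NormedAddCommGroup E]

theorem integral_norm_mul_norm_le_sqrt_mul_sqrt {f g : α → E} (hf : MemLp f 2 μ)
    (hg : MemLp g 2 μ) :
    ∫ x, ‖f x‖ * ‖g x‖ ∂μ ≤ √(∫ x, ‖f x‖ ^ 2 ∂μ) * √(∫ x, ‖g x‖ ^ 2 ∂μ) := by
  have h := integral_mul_norm_le_Lp_mul_Lq (μ := μ) Real.HolderConjugate.two_two
    (f := f) (g := g) (by rwa [ENNReal.ofReal_ofNat]) (by rwa [ENNReal.ofReal_ofNat])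
  simpa only [Real.rpow_two, ← Real.sqrt_eq_rpow] using h

theorem integral_rpow_le_mul_integral_of_le {f : α → ℝ} {M p : ℝ} (hf : Integrable f μ)
    (hf_nonneg : ∀ x, 0 ≤ f x) (hf_le : ∀ x, f x ≤ M) (hp : 1 ≤ p) :
    ∫ x, f x ^ p ∂μ ≤ M ^ (p - 1) * ∫ x, f x ∂μ := by
  rw [← integral_const_mul]
  refine integral_mono_of_nonneg (.of_forall fun x => Real.rpow_nonneg (hf_nonneg x) p)
    (hf.const_mul _) (.of_forall fun x => ?_)
  calc f x ^ p = f x ^ (p - 1) * f x := by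
        rw [← Real.rpow_add_one' (hf_nonneg x) (by linarith), sub_add_cancel]
    _ ≤ M ^ (p - 1) * f x := by
        have := hf_nonneg x
        gcongr
        exact hf_le x
end

/-- For `d ≥ 5` there is `C = C(d) > 0` such that for every `u ∈ H¹(ℝ^d)`, writing
`x = (y, x_d)`,
`∫_ℝ ‖u(·,x_d)‖_{L²_y}^{2d/(d−4)} dx_d ≤ C ‖∂_d u‖₂^{4/(d−4)} ‖u‖₂^{2(d−2)/(d−4)}`. -/
theorem slice_L2_interpolation_critical
    (d : ℕ) (hd : 5 ≤ d) :
    ∃ C : ℝ, 0 < C ∧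
      ∀ u : EuclideanSpace ℝ (Fin (d - 1)) × ℝ → ℂ,
        Differentiable ℝ u →
        MemLp u 2 volume →
        (∀ i : Fin (d - 1),
            MemLp (fun x => fderiv ℝ u x (EuclideanSpace.single i 1, 0)) 2 volume) →
        MemLp (fun x => fderiv ℝ u x (0, 1)) 2 volume →
        (∫ t : ℝ,
            (Real.sqrt (∫ y : EuclideanSpace ℝ (Fin (d - 1)), ‖u (y, t)‖ ^ 2)) ^
              (2 * (d : ℝ) / ((d : ℝ) - 4))) ≤
          C * (Real.sqrt (∫ x : EuclideanSpace ℝ (Fin (d - 1)) × ℝ,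
                ‖fderiv ℝ u x (0, 1)‖ ^ 2)) ^ (4 / ((d : ℝ) - 4)) *
            (Real.sqrt (∫ x : EuclideanSpace ℝ (Fin (d - 1)) × ℝ, ‖u x‖ ^ 2)) ^
              (2 * ((d : ℝ) - 2) / ((d : ℝ) - 4)) := by
  have hd4 : (0 : ℝ) < d - 4 := by
    have : (5 : ℝ) ≤ d := by exact_mod_cast hd
    linarith
  refine ⟨2 ^ (4 / ((d : ℝ) - 4)), by positivity, fun u hu_diff hu _ hu' => ?_⟩
  set A := ∫ x, ‖u x‖ ^ 2
  set B := ∫ x, ‖fderiv ℝ u x (0, 1)‖ ^ 2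
  have hu_sq : Integrable (fun x => ‖u x‖ ^ 2) := hu.norm.integrable_sq
  have h_slice : ∀ t, ∫ y, ‖u (y, t)‖ ^ 2 ≤ 2 * (√A * √B) := fun t =>
    (integral_sq_norm_slice_le (fun y s => (hu_diff (y, s)).hasDerivAt_comp_prodMk) hu_sq
      (hu.norm.integrable_mul hu'.norm) t).trans
      (by gcongr; exact integral_norm_mul_norm_le_sqrt_mul_sqrt hu hu')
  have h_total : ∫ t, ∫ y, ‖u (y, t)‖ ^ 2 = A := (integral_prod_symm _ hu_sq).symm
  have h_sqrt_rpow : ∀ t, √(∫ y, ‖u (y, t)‖ ^ 2) ^ (2 * (d : ℝ) / (d - 4)) =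
      (∫ y, ‖u (y, t)‖ ^ 2) ^ ((d : ℝ) / (d - 4)) := fun t => by
    rw [Real.sqrt_eq_rpow, ← Real.rpow_mul (integral_nonneg fun _ => by positivity)]
    congr 1; field_simp
  have hA : 0 ≤ A := integral_nonneg fun _ => by positivity
  have h_exponent : 2 * ((d : ℝ) - 2) / (d - 4) = 4 / (d - 4) + 2 := by field_simp; ring
  calc _ = ∫ t, (∫ y, ‖u (y, t)‖ ^ 2) ^ ((d : ℝ) / (d - 4)) := by simp_rw [h_sqrt_rpow]
    _ ≤ (2 * (√A * √B)) ^ ((d : ℝ) / (d - 4) - 1) * A :=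
      (integral_rpow_le_mul_integral_of_le hu_sq.integral_prod_right
        (fun t => integral_nonneg fun _ => by positivity) h_slice
        ((one_le_div hd4).2 (by linarith))).trans_eq (by rw [h_total])
    _ = _ := by
      rw [show (d : ℝ) / (d - 4) - 1 = 4 / (d - 4) by field_simp; ring, h_exponent,
        Real.mul_rpow zero_le_two (by positivity), Real.mul_rpow (sqrt_nonneg _) (sqrt_nonneg _),
        Real.rpow_add' (sqrt_nonneg _) (by positivity), Real.rpow_two, Real.sq_sqrt hA]
      ring
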